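/- arXiv:1609.05962 — 4 statements merged into one kernel-verified Lean document; each statement's English description precedes it below -/
import Mathlib

section
/- Let M be an n×n Metzler matrix (all off-diagonal entries nonnegative) that is Hurwitz stable (all eigenvalues have negative real part). Then there exists a strictly positive vector z ∈ ℝ^n such that M·z < 0 entrywise. -/
/-!
Shift `M` to the nonnegative matrix `A = s + M`. For real `t > ‖A‖` the resolvent
`(t - A)⁻¹ = t⁻¹ ∑ (A / t)ᵏ` is entrywise nonnegative, and going down from `t` to `t - δ` multiplies
it by the Neumann series of `δ (t - A)⁻¹`, so nonnegativity propagates downwards for as long as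
`t - A` stays invertible; Hurwitz stability guarantees this down to `t = s`, that is, `-M⁻¹ ≥ 0`.
Then `z = -M⁻¹ 𝟙` is positive (an invertible nonnegative matrix has no zero row) and `M z = -𝟙`.
-/

open Matrix

/-- A real square matrix is Metzler if its off-diagonal entries are nonnegative. -/
def Metzler {m : Type*} (M : Matrix m m ℝ) : Prop :=
  ∀ i j, i ≠ j → 0 ≤ M i j

/-- A real square matrix is Hurwitz stable if all of its (complex) eigenvalues
have strictly negative real part. -/
def HurwitzStable {m : Type*} [Fintype m] [DecidableEq m] (M : Matrix m m ℝ) : Prop :=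
  ∀ z ∈ spectrum ℂ (M.map (algebraMap ℝ ℂ)), z.re < 0

open Set Filter Topology

namespace Matrix

/-- Entrywise nonnegativity (not positive semidefiniteness). -/
def Nonneg {m n α : Type*} [Zero α] [LE α] (X : Matrix m n α) : Prop :=
  ∀ i j, 0 ≤ X i j

section Algebraic

variable {l m n α : Type*} [Semiring α] [PartialOrder α] [IsOrderedRing α]

theorem Nonneg.mul [Fintype m] {X : Matrix l m α} {Y : Matrix m n α} (hX : X.Nonneg)
    (hY : Y.Nonneg) : (X * Y).Nonneg :=
  fun i j => Finset.sum_nonneg fun k _ => mul_nonneg (hX i k) (hY k j)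

theorem nonneg_one [DecidableEq m] : (1 : Matrix m m α).Nonneg := by
  intro i j
  rw [one_apply]
  split_ifs <;> simp

theorem Nonneg.pow [Fintype m] [DecidableEq m] {X : Matrix m m α} (hX : X.Nonneg) (k : ℕ) :
    (X ^ k).Nonneg := by
  induction k with
  | zero => exact pow_zero X ▸ nonneg_one
  | succ k ih => exact pow_succ X k ▸ ih.mul hX

theorem Nonneg.smul {X : Matrix m n α} {c : α} (hc : 0 ≤ c) (hX : X.Nonneg) : (c • X).Nonneg :=
  fun i j => mul_nonneg hc (hX i j)

theorem Nonneg.mulVec_one_pos [Fintype m] [DecidableEq m] [Nontrivial α] {N : Matrix m m α}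
    (hN : N.Nonneg) (hunit : IsUnit N) (i : m) : 0 < (N *ᵥ 1) i := by
  refine (Finset.sum_nonneg fun j _ => ?_).lt_of_ne fun hzero => ?_
  · simpa using hN i j
  -- a zero row of `N` would contradict `N * N' = 1`
  obtain ⟨N', hN'⟩ := hunit.exists_right_inv
  have hrow : ∀ j, N i j = 0 := by
    simpa [mulVec, dotProduct, Finset.sum_eq_zero_iff_of_nonneg (fun j _ => hN i j)] using
      hzero.symm
  have := congrFun (congrFun hN' i) i
  simp [mul_apply, hrow] at this

end Algebraic

theorem Nonneg.of_hasSum {ι m n α : Type*} [AddCommMonoid α] [PartialOrder α]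
    [IsOrderedAddMonoid α] [TopologicalSpace α] [OrderClosedTopology α]
    {f : ι → Matrix m n α} {A : Matrix m n α} (hf : HasSum f A) (h : ∀ k, (f k).Nonneg) :
    A.Nonneg := fun i j =>
  ((Pi.hasSum.mp (Pi.hasSum.mp hf i)) j).nonneg fun k => h k i j

theorem isClosed_setOf_nonneg {m n α : Type*} [Zero α] [TopologicalSpace α] [Preorder α]
    [ClosedIciTopology α] : IsClosed {X : Matrix m n α | X.Nonneg} := by
  simp only [Nonneg, ofPred_forall]
  exact isClosed_iInter fun i => isClosed_iInter fun j =>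
    isClosed_Ici.preimage (continuous_id.matrix_elem i j)

section Resolvent

attribute [local instance] Matrix.linftyOpNormedAddCommGroup Matrix.linftyOpNormedRing
  Matrix.linftyOpNormedAlgebra

variable {m : Type*} [Fintype m] [DecidableEq m] {A : Matrix m m ℝ}

theorem nonneg_inverse_one_sub {X : Matrix m m ℝ} (hX : X.Nonneg) (h : ‖X‖ < 1) :
    (Ring.inverse (1 - X)).Nonneg :=
  .of_hasSum (hasSum_geom_series_inverse X h) hX.pow

theorem nonneg_resolvent_of_norm_lt (hA : A.Nonneg) {t : ℝ} (ht : ‖A‖ < t) :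
    (resolvent A t).Nonneg := by
  have ht₀ : 0 < t := (norm_nonneg A).trans_lt ht
  have hnorm : ‖t⁻¹ • A‖ < 1 := by
    rw [norm_smul, Real.norm_of_nonneg (inv_nonneg.mpr ht₀.le), inv_mul_lt_one₀ ht₀]
    exact ht
  have key := spectrum.units_smul_resolvent_self (r := Units.mk0 t ht₀.ne') (a := A)
  rw [Units.smul_def, Units.smul_def, Units.val_inv_eq_inv_val, Units.val_mk0, resolvent,
    resolvent, map_one] at key
  rw [resolvent, ← inv_smul_smul₀ ht₀.ne' (Ring.inverse _), key]
  exact (nonneg_inverse_one_sub (hA.smul (inv_nonneg.mpr ht₀.le)) hnorm).smul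
    (inv_nonneg.mpr ht₀.le)

theorem Nonneg.resolvent_sub {t δ : ℝ} (ht : t ∈ resolventSet ℝ A) (hR : (resolvent A t).Nonneg)
    (hδ : 0 ≤ δ) (hδR : ‖δ • resolvent A t‖ < 1) : (resolvent A (t - δ)).Nonneg := by
  have hfactor : algebraMap ℝ _ (t - δ) - A =
      (algebraMap ℝ _ t - A) * (1 - δ • resolvent A t) := by
    rw [mul_sub, mul_one, mul_smul_comm, resolvent, Ring.mul_inverse_cancel _ ht, map_sub,
      Algebra.algebraMap_eq_smul_one δ]
    abel
  rw [resolvent, hfactor, Ring.inverse_mul (Or.inl ht)]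
  exact (nonneg_inverse_one_sub (hR.smul hδ) hδR).mul hR

theorem continuousOn_resolvent : ContinuousOn (resolvent A) (resolventSet ℝ A) := fun _ hk =>
  (spectrum.hasDerivAt_resolvent_const_left hk).continuousAt.continuousWithinAt

theorem nonneg_resolvent_of_forall_lt {t : ℝ} (hA : A.Nonneg) (ht : ∀ r ∈ spectrum ℝ A, r < t) :
    (resolvent A t).Nonneg := by
  set S := {r : ℝ | (resolvent A r).Nonneg}
  set T := max t (‖A‖ + 1)
  have hIcc : Icc t T ⊆ resolventSet ℝ A := fun r hr =>
    notMem_compl_iff.mp fun hrσ => (ht r hrσ).not_ge hr.1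
  have hclosed : IsClosed (S ∩ Icc t T) := by
    rw [inter_comm]
    exact (continuousOn_resolvent.mono hIcc).preimage_isClosed_of_isClosed isClosed_Icc
      isClosed_setOf_nonneg
  refine hclosed.mem_of_ge_of_forall_exists_lt ?_ (le_max_left _ _) fun x ⟨hxS, hx⟩ => ?_
  · exact nonneg_resolvent_of_norm_lt hA ((lt_add_one _).trans_le (le_max_right _ _))
  have hsmall : ∀ᶠ δ in 𝓝[>] (0 : ℝ), ‖δ • resolvent A x‖ < 1 ∧ δ < x - t := by
    refine (((continuous_id.smul continuous_const).norm.tendsto' 0 0 ?_).eventually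
      (gt_mem_nhds one_pos)).and (gt_mem_nhds (sub_pos.mpr hx.1)) |>.filter_mono
      nhdsWithin_le_nhds
    simp
  obtain ⟨δ, ⟨hδR, hδx⟩, hδ⟩ := (hsmall.and self_mem_nhdsWithin).exists
  exact ⟨x - δ, Nonneg.resolvent_sub (hIcc (Ioc_subset_Icc_self hx)) hxS hδ.le hδR,
    by linarith, by linarith [show (0 : ℝ) < δ from hδ]⟩

end Resolvent

theorem algebraMap_mem_spectrum_map {m K L : Type*} [Fintype m] [DecidableEq m] [Field K]
    [Field L] [Algebra K L] {M : Matrix m m K} {r : K} (hr : r ∈ spectrum K M) :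
    algebraMap K L r ∈ spectrum L (M.map (algebraMap K L)) := by
  rw [mem_spectrum_iff_isRoot_charpoly] at hr ⊢
  rw [charpoly_map]
  exact hr.map

end Matrix

section Metzler

variable {m : Type*} [Fintype m] [DecidableEq m] {M : Matrix m m ℝ}

theorem Metzler.exists_nonneg_algebraMap_add (hM : Metzler M) :
    ∃ s : ℝ, (algebraMap ℝ (Matrix m m ℝ) s + M).Nonneg := by
  refine ⟨∑ i, |M i i|, fun i j => ?_⟩
  rw [Matrix.add_apply, algebraMap_matrix_apply]
  split_ifs with h
  · subst h
    have := Finset.single_le_sum (fun k _ => abs_nonneg (M k k)) (Finset.mem_univ i)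
    simp only [Algebra.algebraMap_self, RingHom.id_apply]
    linarith [neg_abs_le (M i i)]
  · simpa using hM i j h

theorem Metzler.nonneg_inverse_neg (hM : Metzler M) (hσ : ∀ r ∈ spectrum ℝ M, r < 0) :
    (Ring.inverse (-M)).Nonneg := by
  obtain ⟨s, hs⟩ := hM.exists_nonneg_algebraMap_add
  have hshift : resolvent (algebraMap ℝ _ s + M) s = Ring.inverse (-M) := by
    simp [resolvent]
  rw [← hshift]
  refine nonneg_resolvent_of_forall_lt hs fun r hr => ?_
  have := hσ (r - s) (spectrum.add_mem_add_iff.mp (by rwa [sub_add_cancel]))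
  linarith

theorem HurwitzStable.lt_zero_of_mem_spectrum (hH : HurwitzStable M) {r : ℝ}
    (hr : r ∈ spectrum ℝ M) : r < 0 := by
  simpa using hH _ (algebraMap_mem_spectrum_map (L := ℂ) hr)

end Metzler

/-- A Metzler Hurwitz-stable matrix admits a positive vector $z$ with $Mz<0$. -/
theorem stmt2 {n : ℕ} (M : Matrix (Fin n) (Fin n) ℝ)
    (hM : Metzler M) (hH : HurwitzStable M) :
    ∃ z : Fin n → ℝ, (∀ i, 0 < z i) ∧ ∀ i, (M *ᵥ z) i < 0 := by
  have hσ : ∀ r ∈ spectrum ℝ M, r < 0 := fun r hr => hH.lt_zero_of_mem_spectrum hr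
  have hunit : IsUnit (-M) := (spectrum.isUnit_of_zero_notMem ℝ fun h => (hσ 0 h).false).neg
  have hMN : M * Ring.inverse (-M) = -1 := by
    rw [← neg_eq_iff_eq_neg, ← neg_mul, Ring.mul_inverse_cancel _ hunit]
  refine ⟨Ring.inverse (-M) *ᵥ 1, (hM.nonneg_inverse_neg hσ).mulVec_one_pos hunit.ringInverse,
    fun i => ?_⟩
  simp [mulVec_mulVec, hMN, neg_mulVec]
end

section
/- Let A be an n×n nonnegative matrix, α > 0 with α·ρ(A) < 1, and v = (I - αA)^{-1}𝟙. For a positive vector v̄ ∈ ℝ^n, one has v < v̄ entrywise if and only if there exists a positive vector λ ∈ ℝ^n satisfying 𝟙 + αAλ < λ and λ < v̄ (all inequalities entrywise). -/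
/-!
Since `ρ(αA) < 1`, Gelfand's formula makes the Neumann series `∑ (αA)ᵏ` converge, so
`(I - αA)⁻¹` is entrywise nonnegative. Hence `v = 𝟙 + αAv ≥ 𝟙`, and `v` is the least vector with
`𝟙 + αAλ ≤ λ`: indeed `λ - v = (I - αA)⁻¹ ((I - αA)λ - 𝟙) ≥ 0`. This gives `v ≤ λ < v̄`; conversely,
if `v < v̄` then `λ = (1 + ε) v` works for small `ε > 0`, as `𝟙 + αAλ = λ - ε`.
-/

open Matrix

noncomputable def specRad {m : Type*} [Fintype m] [DecidableEq m]
    (A : Matrix m m ℝ) : ℝ :=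
  (spectralRadius ℂ (A.map (algebraMap ℝ ℂ))).toReal

open Filter Topology
open scoped NNReal ENNReal Pointwise

theorem spectralRadius_ne_top {𝕜 A : Type*} [NormedField 𝕜] [NormedRing A] [NormedAlgebra 𝕜 A]
    [CompleteSpace A] (a : A) : spectralRadius 𝕜 a ≠ ⊤ := by
  refine ne_top_of_le_ne_top ?_ (spectrum.spectralRadius_le_pow_nnnorm_pow_one_div 𝕜 a 0)
  simpa using ENNReal.mul_ne_top ENNReal.coe_ne_top ENNReal.coe_ne_top

theorem spectralRadius_smul {𝕜 A : Type*} [NormedField 𝕜] [Ring A] [Algebra 𝕜 A]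
    (k : 𝕜) (a : A) : spectralRadius 𝕜 (k • a) = ‖k‖₊ * spectralRadius 𝕜 a := by
  rcases eq_or_ne k 0 with rfl | hk
  · simp
  · rw [spectralRadius, ← Units.smul_mk0 hk, spectrum.unit_smul_eq_smul, Units.smul_mk0,
      ← Set.image_smul, iSup_image, spectralRadius, ENNReal.mul_iSup]
    simp [ENNReal.mul_iSup]

/-- Root test against Gelfand's formula. -/
theorem summable_norm_pow_of_spectralRadius_lt_one {A : Type*} [NormedRing A] [NormedAlgebra ℂ A]
    [CompleteSpace A] {a : A} (ha : spectralRadius ℂ a < 1) : Summable fun n ↦ ‖a ^ n‖ := by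
  obtain ⟨r, hρr, hr₁⟩ := ENNReal.lt_iff_exists_nnreal_btwn.1 ha
  have hroot : ∀ᶠ n : ℕ in atTop, (‖a ^ n‖₊ : ℝ≥0∞) ^ (1 / n : ℝ) < r :=
    (spectrum.pow_nnnorm_pow_one_div_tendsto_nhds_spectralRadius a).eventually_lt_const hρr
  refine .of_norm_bounded_eventually (summable_geometric_of_lt_one r.2 (mod_cast hr₁)) ?_
  rw [Nat.cofinite_eq_atTop]
  filter_upwards [hroot, eventually_gt_atTop 0] with n hn hn₀
  rw [one_div, ENNReal.rpow_inv_lt_iff (by positivity), ENNReal.rpow_natCast] at hn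
  rw [norm_norm]
  exact_mod_cast hn.le

namespace Matrix

theorem mulVec_apply_nonneg {m n R : Type*} [Fintype n] [Semiring R] [PartialOrder R]
    [IsOrderedRing R] {M : Matrix m n R} (hM : ∀ i j, 0 ≤ M i j) {w : n → R} (hw : ∀ j, 0 ≤ w j)
    (i : m) : 0 ≤ (M *ᵥ w) i :=
  Finset.sum_nonneg fun j _ ↦ mul_nonneg (hM i j) (hw j)

variable {m : Type*} [Fintype m] [DecidableEq m]

theorem inv_one_sub_eq_tsum_pow {R : Type*} [CommRing R] [TopologicalSpace R]
    [IsTopologicalRing R] [T2Space R] {B : Matrix m m R} (hB : Summable (B ^ ·)) :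
    (1 - B)⁻¹ = ∑' k, B ^ k :=
  inv_eq_left_inv hB.tsum_pow_mul_one_sub

variable {B : Matrix m m ℝ}

theorem inv_one_sub_apply_nonneg (hB₀ : ∀ i j, 0 ≤ B i j) (hB : Summable (B ^ ·)) (i j : m) :
    0 ≤ (1 - B)⁻¹ i j := by
  rw [inv_one_sub_eq_tsum_pow hB]
  exact (hB.hasSum.map (entryAddMonoidHom ℝ i j) (continuous_id.matrix_elem i j)).nonneg
    fun k ↦ pow_apply_nonneg hB₀ k i j

theorem inv_one_sub_mulVec_eq (hB : Summable (B ^ ·)) (u : m → ℝ) :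
    (1 - B)⁻¹ *ᵥ u = u + B *ᵥ ((1 - B)⁻¹ *ᵥ u) := by
  have h := congrArg (· *ᵥ u) hB.one_sub_mul_tsum_pow
  simp only [← inv_one_sub_eq_tsum_pow hB, ← mulVec_mulVec, sub_mulVec, one_mulVec] at h
  exact sub_eq_iff_eq_add.1 h

theorem one_le_inv_one_sub_mulVec_one (hB₀ : ∀ i j, 0 ≤ B i j) (hB : Summable (B ^ ·)) (i : m) :
    1 ≤ ((1 - B)⁻¹ *ᵥ 1) i := by
  have hv : 0 ≤ (B *ᵥ ((1 - B)⁻¹ *ᵥ 1)) i :=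
    mulVec_apply_nonneg hB₀
      (mulVec_apply_nonneg (inv_one_sub_apply_nonneg hB₀ hB) fun _ ↦ zero_le_one) i
  rw [inv_one_sub_mulVec_eq hB]
  simpa using hv

theorem inv_one_sub_mulVec_one_le (hB₀ : ∀ i j, 0 ≤ B i j) (hB : Summable (B ^ ·))
    {lam : m → ℝ} (hlam : ∀ i, 1 + (B *ᵥ lam) i ≤ lam i) (i : m) :
    ((1 - B)⁻¹ *ᵥ 1) i ≤ lam i := by
  have hinv : (1 - B)⁻¹ * (1 - B) = 1 := by
    rw [inv_one_sub_eq_tsum_pow hB]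
    exact hB.tsum_pow_mul_one_sub
  have hgap : lam - (1 - B)⁻¹ *ᵥ 1 = (1 - B)⁻¹ *ᵥ ((1 - B) *ᵥ lam - 1) := by
    rw [mulVec_sub, mulVec_mulVec, hinv, one_mulVec]
  have hslack : ∀ j, 0 ≤ ((1 - B) *ᵥ lam - 1) j := fun j ↦ by
    simpa [sub_mulVec, le_sub_iff_add_le] using hlam j
  have hgap_nonneg := mulVec_apply_nonneg (inv_one_sub_apply_nonneg hB₀ hB) hslack i
  rw [← hgap] at hgap_nonneg
  simpa using hgap_nonneg

theorem exists_one_add_mulVec_lt_of_inv_one_sub_mulVec_one_lt (hB₀ : ∀ i j, 0 ≤ B i j)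
    (hB : Summable (B ^ ·)) {vbar : m → ℝ} (hv : ∀ i, ((1 - B)⁻¹ *ᵥ 1) i < vbar i) :
    ∃ lam : m → ℝ, (∀ i, 0 < lam i) ∧ (∀ i, 1 + (B *ᵥ lam) i < lam i) ∧ ∀ i, lam i < vbar i := by
  set v := (1 - B)⁻¹ *ᵥ 1
  have hv₁ := one_le_inv_one_sub_mulVec_one hB₀ hB
  have hnear : ∀ᶠ ε in 𝓝 (0 : ℝ), ∀ i, (1 + ε) * v i < vbar i :=
    eventually_all.2 fun i ↦
      (Continuous.tendsto' (by fun_prop) 0 (v i) (by simp)).eventually_lt_const (hv i)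
  obtain ⟨ε, hεv, hε⟩ := ((hnear.filter_mono nhdsWithin_le_nhds).and
    (self_mem_nhdsWithin : ∀ᶠ ε in 𝓝[>] (0 : ℝ), 0 < ε)).exists
  refine ⟨(1 + ε) • v, fun i ↦ ?_, fun i ↦ ?_, hεv⟩
  · exact mul_pos (by linarith) (by linarith [hv₁ i])
  · have hfix := congrFun (inv_one_sub_mulVec_eq hB 1) i
    simp only [mulVec_smul, Pi.smul_apply, smul_eq_mul, Pi.add_apply, Pi.one_apply] at hfix ⊢
    nlinarith

theorem inv_one_sub_mulVec_one_lt_iff (hB₀ : ∀ i j, 0 ≤ B i j) (hB : Summable (B ^ ·))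
    (vbar : m → ℝ) : (∀ i, ((1 - B)⁻¹ *ᵥ 1) i < vbar i) ↔
      ∃ lam : m → ℝ, (∀ i, 0 < lam i) ∧ (∀ i, 1 + (B *ᵥ lam) i < lam i) ∧ ∀ i, lam i < vbar i :=
  ⟨exists_one_add_mulVec_lt_of_inv_one_sub_mulVec_one_lt hB₀ hB, fun ⟨_, _, hlam, hbar⟩ i ↦
    (inv_one_sub_mulVec_one_le hB₀ hB (fun j ↦ (hlam j).le) i).trans_lt (hbar i)⟩

end Matrix

section SpecRad

variable {m : Type*} [Fintype m] [DecidableEq m]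

attribute [local instance] Matrix.linftyOpNormedRing Matrix.linftyOpNormedAlgebra

theorem Matrix.linfty_opNorm_map_ofReal (B : Matrix m m ℝ) : ‖B.map (algebraMap ℝ ℂ)‖ = ‖B‖ := by
  simp [linfty_opNorm_def]

theorem specRad_smul {α : ℝ} (hα : 0 ≤ α) (A : Matrix m m ℝ) :
    specRad (α • A) = α * specRad A := by
  have hmap : (α • A).map (algebraMap ℝ ℂ) = (α : ℂ) • A.map (algebraMap ℝ ℂ) := by
    ext i j
    simp
  rw [specRad, hmap, spectralRadius_smul, ENNReal.toReal_mul, specRad]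
  simp [abs_of_nonneg hα]

theorem summable_pow_of_specRad_lt_one {B : Matrix m m ℝ} (hB : specRad B < 1) :
    Summable (B ^ ·) := by
  have hρ : spectralRadius ℂ (B.map (algebraMap ℝ ℂ)) < 1 := by
    rwa [← ENNReal.ofReal_toReal (spectralRadius_ne_top _), ENNReal.ofReal_lt_one]
  refine .of_norm ((summable_norm_pow_of_spectralRadius_lt_one hρ).congr fun k ↦ ?_)
  rw [← Matrix.map_pow B (algebraMap ℝ ℂ), linfty_opNorm_map_ofReal]

end SpecRad

theorem stmt6_general {n : ℕ} (A : Matrix (Fin n) (Fin n) ℝ) (α : ℝ)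
    (hA : ∀ i j, 0 ≤ A i j) (hα : 0 < α) (h : α * specRad A < 1)
    (vbar : Fin n → ℝ) :
    (∀ i, ((1 - α • A)⁻¹ *ᵥ (1 : Fin n → ℝ)) i < vbar i) ↔
      ∃ lam : Fin n → ℝ, (∀ i, 0 < lam i) ∧
        (∀ i, 1 + α * (A *ᵥ lam) i < lam i) ∧
        (∀ i, lam i < vbar i) := by
  have hB₀ : ∀ i j, 0 ≤ (α • A) i j := fun i j ↦ mul_nonneg hα.le (hA i j)
  have hB : Summable ((α • A) ^ ·) :=
    summable_pow_of_specRad_lt_one (by rwa [specRad_smul hα.le])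
  simpa only [smul_mulVec, Pi.smul_apply, smul_eq_mul] using
    inv_one_sub_mulVec_one_lt_iff hB₀ hB vbar

/-- LP characterization (static case): $v<\bar v$ iff there is a positive $\lambda$
with $\mathbf 1+\alpha A\lambda<\lambda$ and $\lambda<\bar v$. -/
theorem stmt6 {n : ℕ} (A : Matrix (Fin n) (Fin n) ℝ) (α : ℝ)
    (hA : ∀ i j, 0 ≤ A i j) (hα : 0 < α) (h : α * specRad A < 1)
    (vbar : Fin n → ℝ) (hvbar : ∀ i, 0 < vbar i) :
    (∀ i, ((1 - α • A)⁻¹ *ᵥ (1 : Fin n → ℝ)) i < vbar i) ↔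
      ∃ lam : Fin n → ℝ, (∀ i, 0 < lam i) ∧
        (∀ i, 1 + α * (A *ᵥ lam) i < lam i) ∧
        (∀ i, lam i < vbar i) :=
  stmt6_general A α hA hα h vbar
end

section
/- Let 𝒢 be a time-homogeneous Markov chain on states {1,…,L} with transition matrix P, let A_1,…,A_L be n×n matrices, and let x(k+1) = α·A_{𝒢(k)}·x(k). Define ζ(k) ∈ ℝ^L as the indicator vector of the state 𝒢(k). Then E[ζ(k+1) ⊗ x(k+1)] = α·𝒜·E[ζ(k) ⊗ x(k)] for all k ≥ 0, where 𝒜 = (Pᵀ ⊗ I_n)(A_1 ⊕ ⋯ ⊕ A_L). -/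
/-!
The state `x k` is a deterministic function of the modes `G 0, …, G (k - 1)`, so `x (k + 1)`
is a function of the path up to time `k`. For such functions the Markov property lets one
replace the indicator of `G (k + 1) = j` by the transition probability `P (G k) j` inside the
expectation. Expanding `x (k + 1) = α A_{G k} x k` and splitting on the value `ℓ` of `G k` then
gives `α ∑ P ℓ j (A ℓ) i m E[1{G k = ℓ} x k m]`, which is row `(j, i)` of `α 𝒜` applied to the
lifted moment.
-/

open Matrix MeasureTheory

noncomputable def calA {n L : ℕ} (P : Matrix (Fin L) (Fin L) ℝ)
    (A : Fin L → Matrix (Fin n) (Fin n) ℝ) :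
    Matrix (Fin L × Fin n) (Fin L × Fin n) ℝ :=
  (Matrix.kroneckerMap (· * ·) Pᵀ (1 : Matrix (Fin n) (Fin n) ℝ)) *
    ((Matrix.blockDiagonal fun ℓ => A ℓ).reindex
      (Equiv.prodComm (Fin n) (Fin L)) (Equiv.prodComm (Fin n) (Fin L)))

namespace MeasureTheory

variable {Ω β : Type*} [MeasurableSpace Ω] {μ : Measure Ω}
  [MeasurableSpace β] [MeasurableSingletonClass β] {X : Ω → β}

theorem integrable_comp_of_finite [Finite β] [IsFiniteMeasure μ] (hX : Measurable X)
    (g : β → ℝ) : Integrable (fun ω => g (X ω)) μ :=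
  (Integrable.of_finite (μ := μ.map X)).comp_measurable hX

theorem integral_comp_eq_sum_of_fintype [Fintype β] [IsFiniteMeasure μ] (hX : Measurable X)
    (g : β → ℝ) : ∫ ω, g (X ω) ∂μ = ∑ b, μ.real (X ⁻¹' {b}) * g b := by
  rw [← integral_map hX.aemeasurable (Integrable.of_finite).aestronglyMeasurable,
    integral_fintype .of_finite]
  simp [map_measureReal_apply hX (measurableSet_singleton _)]

end MeasureTheory

section MarkovChain

variable {Ω β : Type*}

def history (G : ℕ → Ω → β) (k : ℕ) (ω : Ω) : Fin k → β := fun t => G t ω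

theorem measurable_history [MeasurableSpace Ω] [MeasurableSpace β] {G : ℕ → Ω → β}
    (hG : ∀ k, Measurable (G k)) (k : ℕ) : Measurable (history G k) :=
  measurable_pi_lambda _ fun t => hG t

theorem integral_ite_succ_mul_eq_integral_transition_mul [MeasurableSpace Ω] {μ : Measure Ω}
    [IsFiniteMeasure μ] [Fintype β] [DecidableEq β] [MeasurableSpace β]
    [MeasurableSingletonClass β] {P : Matrix β β ℝ}
    (hP : ∀ a b, 0 ≤ P a b) {G : ℕ → Ω → β} (hG : ∀ k, Measurable (G k)) {k : ℕ}
    (hMarkov : ∀ (j : β) (s : Fin (k + 1) → β),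
      μ {ω | G (k + 1) ω = j ∧ ∀ t : Fin (k + 1), G t ω = s t}
        = ENNReal.ofReal (P (s (Fin.last k)) j) * μ {ω | ∀ t : Fin (k + 1), G t ω = s t})
    (j : β) (f : (Fin (k + 1) → β) → ℝ) :
    ∫ ω, (if G (k + 1) ω = j then 1 else 0) * f (history G (k + 1) ω) ∂μ
      = ∫ ω, P (G k ω) j * f (history G (k + 1) ω) ∂μ := by
  have hH := measurable_history hG (k + 1)
  have hj : MeasurableSet {ω | G (k + 1) ω = j} := hG _ (measurableSet_singleton j)
  have hcyl : ∀ s, history G (k + 1) ⁻¹' {s} = {ω | ∀ t : Fin (k + 1), G t ω = s t} := by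
    intro s; ext ω; simp [history, funext_iff]
  calc ∫ ω, (if G (k + 1) ω = j then 1 else 0) * f (history G (k + 1) ω) ∂μ
      = ∫ ω in {ω | G (k + 1) ω = j}, f (history G (k + 1) ω) ∂μ := by
        rw [← integral_indicator hj]
        congr 1 with ω
        simp [Set.indicator_apply, ite_mul]
    _ = ∑ s, μ.real (history G (k + 1) ⁻¹' {s} ∩ {ω | G (k + 1) ω = j}) * f s := by
        rw [integral_comp_eq_sum_of_fintype hH]
        simp only [measureReal_restrict_apply (hH (measurableSet_singleton _))]
    _ = ∑ s, μ.real (history G (k + 1) ⁻¹' {s}) * (P (s (Fin.last k)) j * f s) := by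
        refine Finset.sum_congr rfl fun s _ => ?_
        have hset : history G (k + 1) ⁻¹' {s} ∩ {ω | G (k + 1) ω = j}
            = {ω | G (k + 1) ω = j ∧ ∀ t : Fin (k + 1), G t ω = s t} := by
          rw [hcyl]; ext ω; simp [and_comm]
        rw [measureReal_def, measureReal_def, hset, hMarkov, hcyl, ENNReal.toReal_mul,
          ENNReal.toReal_ofReal (hP _ _)]
        ring
    _ = ∫ ω, P (G k ω) j * f (history G (k + 1) ω) ∂μ :=
        (integral_comp_eq_sum_of_fintype hH fun s => P (s (Fin.last k)) j * f s).symm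

noncomputable def jumpState {ι : Type*} [Fintype ι] (A : β → Matrix ι ι ℝ) (α : ℝ)
    (x0 : ι → ℝ) : (k : ℕ) → (Fin k → β) → ι → ℝ
  | 0, _ => x0
  | k + 1, s => α • (A (s (Fin.last k)) *ᵥ jumpState A α x0 k (Fin.init s))

theorem eq_jumpState_history {ι : Type*} [Fintype ι] {A : β → Matrix ι ι ℝ} {α : ℝ}
    {x0 : ι → ℝ} {G : ℕ → Ω → β} {x : ℕ → Ω → ι → ℝ} (hx0 : ∀ ω, x 0 ω = x0)
    (hx : ∀ k ω, x (k + 1) ω = α • (A (G k ω) *ᵥ x k ω)) (k : ℕ) (ω : Ω) :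
    x k ω = jumpState A α x0 k (history G k ω) := by
  induction k with
  | zero => exact hx0 ω
  | succ k ih => rw [hx, ih]; rfl

end MarkovChain

theorem calA_apply {n L : ℕ} (P : Matrix (Fin L) (Fin L) ℝ)
    (A : Fin L → Matrix (Fin n) (Fin n) ℝ) (j ℓ : Fin L) (i m : Fin n) :
    calA P A (j, i) (ℓ, m) = P ℓ j * A ℓ i m := by
  simp [calA, Matrix.mul_apply, Fintype.sum_prod_type, Matrix.blockDiagonal_apply,
    Matrix.one_apply]

theorem stmt10_general {n L : ℕ} {Ω : Type*} [MeasurableSpace Ω]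
    (μ : Measure Ω) [IsProbabilityMeasure μ]
    (P : Matrix (Fin L) (Fin L) ℝ)
    (hP : ∀ ℓ k, 0 ≤ P ℓ k)
    (G : ℕ → Ω → Fin L) (hG : ∀ k, Measurable (G k))
    -- time-homogeneous Markov property with transition probabilities $P_{\ell k}$:
    (hMarkov : ∀ (k : ℕ) (j : Fin L) (s : Fin (k + 1) → Fin L),
      μ {ω | G (k + 1) ω = j ∧ ∀ t : Fin (k + 1), G t ω = s t}
        = ENNReal.ofReal (P (s (Fin.last k)) j) *
            μ {ω | ∀ t : Fin (k + 1), G t ω = s t})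
    (A : Fin L → Matrix (Fin n) (Fin n) ℝ) (α : ℝ)
    (x0 : Fin n → ℝ) (x : ℕ → Ω → Fin n → ℝ)
    (hx0 : ∀ ω, x 0 ω = x0)
    (hx : ∀ k ω, x (k + 1) ω = α • ((A (G k ω)) *ᵥ x k ω)) :
    ∀ k : ℕ,
      (fun p : Fin L × Fin n =>
          ∫ ω, (if G (k + 1) ω = p.1 then (1 : ℝ) else 0) * x (k + 1) ω p.2 ∂μ)
        = (α • calA P A) *ᵥ
          (fun p : Fin L × Fin n =>
            ∫ ω, (if G k ω = p.1 then (1 : ℝ) else 0) * x k ω p.2 ∂μ) := by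
  intro k
  ext ⟨j, i⟩
  have hxH := eq_jumpState_history (G := G) hx0 hx
  have hint : ∀ ℓ m, Integrable (fun ω => (if G k ω = ℓ then (1 : ℝ) else 0) * x k ω m) μ := by
    intro ℓ m
    simp_rw [hxH]
    exact integrable_comp_of_finite ((hG k).prodMk (measurable_history hG k))
      fun p => (if p.1 = ℓ then 1 else 0) * jumpState A α x0 k p.2 m
  have hdecomp : ∀ ω, P (G k ω) j * x (k + 1) ω i
      = ∑ ℓ, ∑ m, α * P ℓ j * A ℓ i m * ((if G k ω = ℓ then 1 else 0) * x k ω m) := by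
    intro ω
    simp [hx, Matrix.mulVec, dotProduct, Finset.mul_sum, ite_mul, mul_assoc, mul_left_comm]
  calc ∫ ω, (if G (k + 1) ω = j then 1 else 0) * x (k + 1) ω i ∂μ
      = ∫ ω, P (G k ω) j * x (k + 1) ω i ∂μ := by
        simp_rw [hxH]
        exact integral_ite_succ_mul_eq_integral_transition_mul hP hG (hMarkov k) j
          fun s => jumpState A α x0 (k + 1) s i
    _ = ∑ ℓ, ∑ m, α * P ℓ j * A ℓ i m *
          ∫ ω, (if G k ω = ℓ then 1 else 0) * x k ω m ∂μ := by
        simp_rw [hdecomp]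
        rw [integral_finsetSum _ fun ℓ _ => integrable_finsetSum _ fun m _ =>
          (hint ℓ m).const_mul _]
        simp_rw [integral_finsetSum _ fun m _ => (hint _ m).const_mul _, integral_const_mul]
    _ = _ := by
        simp [Matrix.mulVec, dotProduct, Fintype.sum_prod_type, calA_apply, mul_assoc]

/-- For a time-homogeneous Markov chain $\mathcal G$ on $[L]$ with transition
matrix $P$ and the jump linear system $x(k+1)=\alpha A_{\mathcal G(k)}x(k)$,
the lifted first moments satisfy
$E[\zeta(k+1)\otimes x(k+1)] = \alpha\mathcal A\,E[\zeta(k)\otimes x(k)]$. -/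
theorem stmt10 {n L : ℕ} {Ω : Type*} [MeasurableSpace Ω]
    (μ : Measure Ω) [IsProbabilityMeasure μ]
    (P : Matrix (Fin L) (Fin L) ℝ)
    (hP : ∀ ℓ k, 0 ≤ P ℓ k) (hProw : ∀ ℓ, ∑ k, P ℓ k = 1)
    (G : ℕ → Ω → Fin L) (hG : ∀ k, Measurable (G k))
    -- time-homogeneous Markov property with transition probabilities $P_{\ell k}$:
    (hMarkov : ∀ (k : ℕ) (j : Fin L) (s : Fin (k + 1) → Fin L),
      μ {ω | G (k + 1) ω = j ∧ ∀ t : Fin (k + 1), G t ω = s t}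
        = ENNReal.ofReal (P (s (Fin.last k)) j) *
            μ {ω | ∀ t : Fin (k + 1), G t ω = s t})
    (A : Fin L → Matrix (Fin n) (Fin n) ℝ) (α : ℝ)
    (x0 : Fin n → ℝ) (x : ℕ → Ω → Fin n → ℝ)
    (hx0 : ∀ ω, x 0 ω = x0)
    (hx : ∀ k ω, x (k + 1) ω = α • ((A (G k ω)) *ᵥ x k ω)) :
    ∀ k : ℕ,
      (fun p : Fin L × Fin n =>
          ∫ ω, (if G (k + 1) ω = p.1 then (1 : ℝ) else 0) * x (k + 1) ω p.2 ∂μ)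
        = (α • calA P A) *ᵥ
          (fun p : Fin L × Fin n =>
            ∫ ω, (if G k ω = p.1 then (1 : ℝ) else 0) * x k ω p.2 ∂μ) :=
  stmt10_general μ P hP G hG hMarkov A α x0 x hx0 hx
end

section
/- Let P be an L×L row-stochastic matrix, A_ℓ nonnegative n×n matrices, and 𝒜 the nL×nL matrix with (k,ℓ)-block P_{ℓk}A_ℓ. If every A_ℓ satisfies A_ℓ ≤ Ā entrywise for a common nonnegative matrix Ā, then ρ(𝒜) ≤ ρ(Ā). -/
open Matrix

open Filter ENNReal

attribute [local instance] Matrix.linftyOpNormedAddCommGroup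
attribute [local instance] Matrix.linftyOpNormedRing Matrix.linftyOpNormedAlgebra

lemma specrad_pow_entry_nonneg {m : Type*} [Fintype m] [DecidableEq m] {M : Matrix m m ℝ}
    (hM : ∀ i j, 0 ≤ M i j) (k : ℕ) : ∀ i j, 0 ≤ (M ^ k) i j := by
  induction k with
  | zero =>
      intro i j
      rw [pow_zero, Matrix.one_apply]
      split <;> norm_num
  | succ k ih =>
      intro i j
      rw [pow_succ, Matrix.mul_apply]
      exact Finset.sum_nonneg fun s _ => mul_nonneg (ih i s) (hM s j)

lemma specrad_spectrum_transpose {m : Type*} [Fintype m] [DecidableEq m] (M : Matrix m m ℂ) :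
    spectrum ℂ Mᵀ = spectrum ℂ M := by
  ext z
  have hdet : (algebraMap ℂ (Matrix m m ℂ) z - Mᵀ).det
      = (algebraMap ℂ (Matrix m m ℂ) z - M).det := by
    rw [← Matrix.det_transpose (algebraMap ℂ (Matrix m m ℂ) z - M), Matrix.transpose_sub]
    simp [Algebra.algebraMap_eq_smul_one, Matrix.transpose_smul]
  simp only [spectrum.mem_iff, Matrix.isUnit_iff_isUnit_det, hdet]

lemma specrad_nnnorm_le {m m' : Type*} [Fintype m] [Fintype m']
    (X : Matrix m m ℝ) (Y : Matrix m' m' ℝ)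
    (hX : ∀ i j, 0 ≤ X i j) (f : m → m')
    (h : ∀ i, ∑ j, X i j ≤ ∑ j, Y (f i) j) :
    ‖X.map (algebraMap ℝ ℂ)‖₊ ≤ ‖Y.map (algebraMap ℝ ℂ)‖₊ := by
  rw [Matrix.linfty_opNNNorm_def, Matrix.linfty_opNNNorm_def]
  refine Finset.sup_le fun i _ => le_trans ?_ (Finset.le_sup (Finset.mem_univ (f i)))
  rw [← NNReal.coe_le_coe]
  push_cast
  have key : ∀ (x : ℝ), ((‖algebraMap ℝ ℂ x‖₊ : ℝ)) = |x| := by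
    intro x
    simp [Complex.coe_algebraMap, Complex.norm_real, Real.norm_eq_abs]
  calc ∑ j, ((‖(X.map (algebraMap ℝ ℂ)) i j‖₊ : ℝ))
      = ∑ j, X i j := by
        refine Finset.sum_congr rfl fun j _ => ?_
        rw [Matrix.map_apply, key, abs_of_nonneg (hX i j)]
    _ ≤ ∑ j, Y (f i) j := h i
    _ ≤ ∑ j, ((‖(Y.map (algebraMap ℝ ℂ)) (f i) j‖₊ : ℝ)) := by
        refine Finset.sum_le_sum fun j _ => ?_
        rw [Matrix.map_apply, key]
        exact le_abs_self _

/-- If every layer satisfies $A_\ell\le\bar A$, then the spectral radius of the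
lifted matrix $\mathcal A$ (whose $(k,\ell)$ block is $P_{\ell k}A_\ell$) is at
most $\rho(\bar A)$. -/
theorem stmt18 {n L : ℕ} (P : Matrix (Fin L) (Fin L) ℝ)
    (hP : ∀ ℓ k, 0 ≤ P ℓ k) (hProw : ∀ ℓ, ∑ k, P ℓ k = 1)
    (A : Fin L → Matrix (Fin n) (Fin n) ℝ) (hA : ∀ ℓ i j, 0 ≤ A ℓ i j)
    (Abar : Matrix (Fin n) (Fin n) ℝ) (hAbar : ∀ i j, 0 ≤ Abar i j)
    (hle : ∀ ℓ i j, A ℓ i j ≤ Abar i j) :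
    specRad (Matrix.of fun q r : Fin L × Fin n => P r.1 q.1 * A r.1 q.2 r.2)
      ≤ specRad Abar := by
  classical
  set C : Matrix (Fin L × Fin n) (Fin L × Fin n) ℝ :=
    Matrix.of fun q r : Fin L × Fin n => P r.1 q.1 * A r.1 q.2 r.2 with hC
  have hCnn : ∀ q r, 0 ≤ C q r := fun q r =>
    mul_nonneg (hP r.1 q.1) (hA r.1 q.2 r.2)
  -- column sums of powers of C are bounded by column sums of powers of Abar
  have colsum : ∀ k : ℕ, ∀ r : Fin L × Fin n,
      ∑ q, (C ^ k) q r ≤ ∑ i, (Abar ^ k) i r.2 := by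
    intro k
    induction k with
    | zero =>
        intro r
        rw [pow_zero, pow_zero]
        rw [show (∑ q, (1 : Matrix (Fin L × Fin n) (Fin L × Fin n) ℝ) q r) = 1 by
          simp only [Matrix.one_apply, Finset.sum_ite_eq', Finset.mem_univ, if_true]]
        rw [show (∑ i, (1 : Matrix (Fin n) (Fin n) ℝ) i r.2) = 1 by
          simp only [Matrix.one_apply, Finset.sum_ite_eq', Finset.mem_univ, if_true]]
    | succ k ih =>
        intro r
        have hT : ∀ j, 0 ≤ ∑ i, (Abar ^ k) i j := fun j =>
          Finset.sum_nonneg fun i _ => specrad_pow_entry_nonneg hAbar k i j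
        calc ∑ q, (C ^ (k + 1)) q r
            = ∑ s, (∑ q, (C ^ k) q s) * C s r := by
              rw [pow_succ]
              simp_rw [Matrix.mul_apply]
              rw [Finset.sum_comm]
              exact Finset.sum_congr rfl fun s _ => by rw [Finset.sum_mul]
          _ ≤ ∑ s, (∑ i, (Abar ^ k) i s.2) * C s r := by
              refine Finset.sum_le_sum fun s _ => mul_le_mul_of_nonneg_right (ih s) (hCnn s r)
          _ = (∑ ℓ, P r.1 ℓ) * ∑ j, (∑ i, (Abar ^ k) i j) * A r.1 j r.2 := by
              rw [Fintype.sum_prod_type, Finset.sum_mul]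
              refine Finset.sum_congr rfl fun ℓ _ => ?_
              rw [Finset.mul_sum]
              refine Finset.sum_congr rfl fun j _ => ?_
              simp only [hC, Matrix.of_apply]
              ring
          _ = ∑ j, (∑ i, (Abar ^ k) i j) * A r.1 j r.2 := by rw [hProw, one_mul]
          _ ≤ ∑ j, (∑ i, (Abar ^ k) i j) * Abar j r.2 :=
              Finset.sum_le_sum fun j _ =>
                mul_le_mul_of_nonneg_left (hle r.1 j r.2) (hT j)
          _ = ∑ i, (Abar ^ (k + 1)) i r.2 := by
              simp_rw [pow_succ, Matrix.mul_apply, Finset.sum_mul]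
              rw [Finset.sum_comm]
  -- norm comparison for powers of the transposes, mapped to ℂ
  set c : ℝ →+* ℂ := algebraMap ℝ ℂ with hc
  have hnorm : ∀ k : ℕ, ‖(Cᵀ.map c) ^ k‖₊ ≤ ‖(Abarᵀ.map c) ^ k‖₊ := by
    intro k
    have e1 : (Cᵀ.map c) ^ k = ((C ^ k)ᵀ).map c := by
      have hmp := map_pow (RingHom.mapMatrix (m := Fin L × Fin n) c) C k
      simp only [RingHom.mapMatrix_apply] at hmp
      rw [Matrix.transpose_map, Matrix.transpose_map, hmp, Matrix.transpose_pow]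
    have e2 : (Abarᵀ.map c) ^ k = ((Abar ^ k)ᵀ).map c := by
      have hmp := map_pow (RingHom.mapMatrix (m := Fin n) c) Abar k
      simp only [RingHom.mapMatrix_apply] at hmp
      rw [Matrix.transpose_map, Matrix.transpose_map, hmp, Matrix.transpose_pow]
    rw [e1, e2]
    refine specrad_nnnorm_le ((C ^ k)ᵀ) ((Abar ^ k)ᵀ)
      (fun i j => specrad_pow_entry_nonneg hCnn k j i) Prod.snd ?_
    intro q
    simpa [Matrix.transpose_apply] using colsum k q
  -- spectral radius chain in ℝ≥0∞
  have hCt : spectralRadius ℂ (C.map c) = spectralRadius ℂ (Cᵀ.map c) := by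
    unfold spectralRadius
    rw [Matrix.transpose_map, specrad_spectrum_transpose]
  have hAt : spectralRadius ℂ (Abar.map c) = spectralRadius ℂ (Abarᵀ.map c) := by
    unfold spectralRadius
    rw [Matrix.transpose_map, specrad_spectrum_transpose]
  have h1 : spectralRadius ℂ (Cᵀ.map c) ≤
      atTop.liminf fun k : ℕ => (‖(Cᵀ.map c) ^ k‖₊ : ℝ≥0∞) ^ (1 / k : ℝ) :=
    spectrum.spectralRadius_le_liminf_pow_nnnorm_pow_one_div ℂ _
  have h2 : (atTop.liminf fun k : ℕ => (‖(Cᵀ.map c) ^ k‖₊ : ℝ≥0∞) ^ (1 / k : ℝ)) ≤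
      atTop.liminf fun k : ℕ => (‖(Abarᵀ.map c) ^ k‖₊ : ℝ≥0∞) ^ (1 / k : ℝ) := by
    refine Filter.liminf_le_liminf (Filter.Eventually.of_forall fun k => ?_)
    exact ENNReal.rpow_le_rpow (by exact_mod_cast hnorm k) (by positivity)
  have h3 : (atTop.liminf fun k : ℕ => (‖(Abarᵀ.map c) ^ k‖₊ : ℝ≥0∞) ^ (1 / k : ℝ)) =
      spectralRadius ℂ (Abarᵀ.map c) :=
    (spectrum.pow_nnnorm_pow_one_div_tendsto_nhds_spectralRadius (Abarᵀ.map c)).liminf_eq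
  have hmain : spectralRadius ℂ (C.map c) ≤ spectralRadius ℂ (Abar.map c) := by
    rw [hCt, hAt]
    exact h1.trans (h2.trans_eq h3)
  have hfin : spectralRadius ℂ (Abar.map c) ≠ ⊤ := by
    refine ne_top_of_le_ne_top ?_
      (spectrum.spectralRadius_le_pow_nnnorm_pow_one_div ℂ (Abar.map c) 0)
    exact ENNReal.mul_ne_top
      (ENNReal.rpow_ne_top_of_nonneg (by norm_num) ENNReal.coe_ne_top)
      (ENNReal.rpow_ne_top_of_nonneg (by norm_num) ENNReal.coe_ne_top)
  exact ENNReal.toReal_mono hfin hmain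
end
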